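/- arXiv:1303.2280 — 2 statements merged into one kernel-verified Lean document; each statement's English description precedes it below -/
import Mathlib

section
/- Suppose A is a real n×n matrix, C is r×n, and there exists a symmetric positive definite P̂ such that Aᵀ P̂ + P̂ A − Cᵀ C is negative definite. Then with M = −(1/2) P̂⁻¹ Cᵀ, the matrix A + M C is Hurwitz. -/
open Matrix

/-- Induced `l2` (spectral) operator norm of a real matrix. -/
noncomputable def opNorm {m n : ℕ} (M : Matrix (Fin m) (Fin n) ℝ) : ℝ :=
  ‖(LinearMap.toContinuousLinearMap (Matrix.toEuclideanLin M) :
      EuclideanSpace ℝ (Fin n) →L[ℝ] EuclideanSpace ℝ (Fin m))‖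

/-- Smallest eigenvalue of a symmetric real matrix (via the Rayleigh quotient). -/
noncomputable def lamMin {n : ℕ} (M : Matrix (Fin n) (Fin n) ℝ) : ℝ :=
  ⨅ x : {x : EuclideanSpace ℝ (Fin n) // ‖x‖ = 1},
    (inner ℝ ((Matrix.toEuclideanLin M) x.1) x.1 : ℝ)

/-- Largest eigenvalue of a symmetric real matrix (via the Rayleigh quotient). -/
noncomputable def lamMax {n : ℕ} (M : Matrix (Fin n) (Fin n) ℝ) : ℝ :=
  ⨆ x : {x : EuclideanSpace ℝ (Fin n) // ‖x‖ = 1},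
    (inner ℝ ((Matrix.toEuclideanLin M) x.1) x.1 : ℝ)

/-- A real matrix is Hurwitz if all its (complex) eigenvalues, i.e. the roots of its
characteristic polynomial over `ℂ`, have negative real part. -/
def IsHurwitz {ι : Type*} [Fintype ι] [DecidableEq ι] (A : Matrix ι ι ℝ) : Prop :=
  ∀ μ : ℂ, ((A.map (Complex.ofReal)).charpoly).IsRoot μ → μ.re < 0

/-!
Lyapunov argument. If `F v = μ v` with `v ≠ 0` (over `ℂ`), then
`v* (Fᵀ P + P F) v = 2 Re μ · v* P v`, so `P ≻ 0` and `Fᵀ P + P F ≺ 0` force `Re μ < 0`.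
For the observer gain `M = -½ P̂⁻¹ Cᵀ` the two cross terms `(M C)ᵀ P̂` and `P̂ M C` each
contribute `-½ Cᵀ C`, so `F = A + M C` satisfies `Fᵀ P̂ + P̂ F = Aᵀ P̂ + P̂ A - Cᵀ C ≺ 0`.
-/

open scoped ComplexOrder

namespace Matrix

variable {ι : Type*} [Fintype ι]

lemma re_star_dotProduct_map_ofReal_mulVec (R : Matrix ι ι ℝ) (v : ι → ℂ) :
    (star v ⬝ᵥ (R.map (↑) *ᵥ v)).re =
      (fun i ↦ (v i).re) ⬝ᵥ (R *ᵥ fun i ↦ (v i).re) +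
        (fun i ↦ (v i).im) ⬝ᵥ (R *ᵥ fun i ↦ (v i).im) := by
  simp only [dotProduct, mulVec, Pi.star_apply, map_apply, Complex.re_sum, Finset.mul_sum,
    ← Finset.sum_add_distrib]
  refine Finset.sum_congr rfl fun i _ ↦ Finset.sum_congr rfl fun j _ ↦ ?_
  simp [Complex.mul_re, Complex.mul_im]

theorem PosDef.map_ofReal {R : Matrix ι ι ℝ} (hR : R.PosDef) :
    (R.map ((↑) : ℝ → ℂ)).PosDef := by
  have hherm : (R.map ((↑) : ℝ → ℂ)).IsHermitian :=
    hR.isHermitian.map _ fun x ↦ (Complex.conj_ofReal x).symm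
  refine .of_dotProduct_mulVec_pos hherm fun v hv ↦
    RCLike.pos_iff.2 ⟨?_, hherm.im_star_dotProduct_mulVec_self v⟩
  set a : ι → ℝ := fun i ↦ (v i).re
  set b : ι → ℝ := fun i ↦ (v i).im
  have hab : a ≠ 0 ∨ b ≠ 0 := by
    by_contra! h
    exact hv <| funext fun i ↦ Complex.ext (congrFun h.1 i) (congrFun h.2 i)
  change 0 < (star v ⬝ᵥ (R.map (↑) *ᵥ v)).re
  rw [re_star_dotProduct_map_ofReal_mulVec]
  have ha := hR.posSemidef.dotProduct_mulVec_nonneg a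
  have hb := hR.posSemidef.dotProduct_mulVec_nonneg b
  simp only [star_trivial] at ha hb
  rcases hab with h | h <;>
  · have := hR.dotProduct_mulVec_pos h
    simp only [star_trivial] at this
    linarith

theorem re_lt_zero_of_lyapunov {𝕜 : Type*} [RCLike 𝕜] {F P : Matrix ι ι 𝕜} (hP : P.PosDef)
    (hQ : (-(Fᴴ * P + P * F)).PosDef) {μ : 𝕜} {v : ι → 𝕜} (hv : v ≠ 0)
    (hFv : F *ᵥ v = μ • v) : RCLike.re μ < 0 := by
  set s := star v ⬝ᵥ (P *ᵥ v)
  have hquad : star v ⬝ᵥ ((Fᴴ * P + P * F) *ᵥ v) = ((2 * RCLike.re μ : ℝ) : 𝕜) * s := by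
    rw [add_mulVec, ← mulVec_mulVec, ← mulVec_mulVec, hFv, dotProduct_add, dotProduct_mulVec,
      ← star_mulVec, hFv, star_smul, smul_dotProduct, mulVec_smul, dotProduct_smul]
    simp only [smul_eq_mul, ← add_mul, RCLike.star_def, add_comm (starRingEnd 𝕜 μ),
      RCLike.add_conj]
    push_cast
    rfl
  have hs := RCLike.pos_iff.1 (hP.dotProduct_mulVec_pos hv)
  have hq := RCLike.pos_iff.1 (hQ.dotProduct_mulVec_pos hv)
  rw [neg_mulVec, dotProduct_neg, hquad, map_neg, RCLike.re_ofReal_mul] at hq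
  nlinarith [hs.1, hq.1]

end Matrix

theorem IsHurwitz.of_lyapunov {ι : Type*} [Fintype ι] [DecidableEq ι] {F P : Matrix ι ι ℝ}
    (hP : P.PosDef) (hQ : (-(Fᵀ * P + P * F)).PosDef) : IsHurwitz F := by
  intro μ hμ
  set φ := (Complex.ofRealHom).mapMatrix (m := ι)
  have hμ' : Module.End.HasEigenvalue (toLin' (φ F)) μ := by
    rwa [Module.End.hasEigenvalue_iff_isRoot_charpoly, charpoly_toLin']
  obtain ⟨v, hv⟩ := hμ'.exists_hasEigenvector
  have hconj : (φ F)ᴴ = φ Fᵀ := by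
    ext i j
    simp [φ]
  refine re_lt_zero_of_lyapunov (F := φ F) (P := φ P) hP.map_ofReal ?_ hv.2 hv.apply_eq_smul
  rw [hconj, ← map_mul, ← map_mul, ← map_add, ← map_neg]
  exact hQ.map_ofReal

lemma closedLoop_lyapunov_eq {ι κ : Type*} [Fintype ι] [DecidableEq ι] [Fintype κ]
    (A : Matrix ι ι ℝ) (C : Matrix κ ι ℝ) {P : Matrix ι ι ℝ} (hP : P.IsSymm)
    (hdet : IsUnit P.det) :
    (A + (-((1/2 : ℝ) • (P⁻¹ * Cᵀ))) * C)ᵀ * P + P * (A + (-((1/2 : ℝ) • (P⁻¹ * Cᵀ))) * C) =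
      Aᵀ * P + P * A - Cᵀ * C := by
  have hleft : (P⁻¹ * Cᵀ * C)ᵀ * P = Cᵀ * C := by
    rw [transpose_mul, transpose_mul, transpose_nonsing_inv, hP.eq, transpose_transpose,
      Matrix.mul_assoc, Matrix.mul_assoc, nonsing_inv_mul _ hdet, Matrix.mul_one]
  have hright : P * (P⁻¹ * Cᵀ * C) = Cᵀ * C := by
    rw [← Matrix.mul_assoc, ← Matrix.mul_assoc, mul_nonsing_inv _ hdet, Matrix.one_mul]
  rw [Matrix.neg_mul, Matrix.smul_mul, ← sub_eq_add_neg, transpose_sub, transpose_smul,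
    Matrix.sub_mul, Matrix.mul_sub, Matrix.smul_mul, Matrix.mul_smul, hleft, hright]
  module

/-- If `P̂ ≻ 0` and `Aᵀ P̂ + P̂ A − Cᵀ C ≺ 0`, then `A + M C` with
`M = −(1/2) P̂⁻¹ Cᵀ` is Hurwitz. -/
theorem observer_gain_hurwitz {n r : ℕ} (A : Matrix (Fin n) (Fin n) ℝ)
    (C : Matrix (Fin r) (Fin n) ℝ) (Phat : Matrix (Fin n) (Fin n) ℝ)
    (hPhat : Phat.PosDef)
    (hLMI : (-(Aᵀ * Phat + Phat * A - Cᵀ * C)).PosDef) :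
    IsHurwitz (A + (-((1/2 : ℝ) • (Phat⁻¹ * Cᵀ))) * C) := by
  refine IsHurwitz.of_lyapunov hPhat ?_
  rwa [closedLoop_lyapunov_eq A C (isHermitian_iff_isSymm.1 hPhat.isHermitian)
    hPhat.det_pos.ne'.isUnit]
end

section
/- Let A, B, H, L be real matrices of compatible sizes, and let P, Q be symmetric positive definite matrices satisfying the Riccati equation Aᵀ P + P A − P B Bᵀ P + Q = 0. If ‖B L + H‖ < λmin(Q) / (2 λmax(P)) − β for some β ≥ 0, then with K = −(1/2) Bᵀ P, the matrix (A + H + B(K + L))ᵀ P + P (A + H + B(K + L)) + 2 β P is negative definite; in particular all eigenvalues of A + H + B(K+L) have real part less than −β. -/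
open Matrix

/-!
With `M = B L + H`, the Riccati equation turns the negated closed-loop Lyapunov matrix into
`Q - (Mᵀ P + P M + 2 β P)`. Its quadratic form is at least
`(λmin(Q) - 2 λmax(P) (‖M‖ + β)) ‖x‖²` by the Rayleigh-quotient bounds and the Cauchy–Schwarz
inequality for the form of `P`. If `v` is a complex eigenvector of the closed-loop matrix with
eigenvalue `μ`, the Hermitian form of the negated Lyapunov matrix at `v` equals
`-(2 Re μ + 2 β) v* P v`, so its positivity forces `Re μ < -β`.
-/

open WithLp
open scoped InnerProductSpace

section Rayleigh

variable {n : ℕ} (M : Matrix (Fin n) (Fin n) ℝ)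

lemma inner_toEuclideanLin_toLp_self (x : Fin n → ℝ) :
    ⟪toEuclideanLin M (toLp 2 x), toLp 2 x⟫_ℝ = x ⬝ᵥ (M *ᵥ x) := by
  simp [EuclideanSpace.inner_toLp_toLp]

lemma norm_toLp_mulVec_le {m : ℕ} (N : Matrix (Fin m) (Fin n) ℝ) (x : Fin n → ℝ) :
    ‖toLp 2 (N *ᵥ x)‖ ≤ opNorm N * ‖toLp 2 x‖ :=
  (LinearMap.toContinuousLinearMap (toEuclideanLin N)).le_opNorm (toLp 2 x)

lemma abs_inner_toEuclideanLin_self_le {x : EuclideanSpace ℝ (Fin n)} (hx : ‖x‖ = 1) :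
    |⟪toEuclideanLin M x, x⟫_ℝ| ≤ opNorm M := by
  obtain ⟨y, rfl⟩ : ∃ y, toLp 2 y = x := ⟨ofLp x, rfl⟩
  calc |⟪toEuclideanLin M (toLp 2 y), toLp 2 y⟫_ℝ| ≤ ‖toLp 2 (M *ᵥ y)‖ * ‖toLp 2 y‖ :=
        abs_real_inner_le_norm _ _
    _ ≤ opNorm M * ‖toLp 2 y‖ * ‖toLp 2 y‖ := by gcongr; exact norm_toLp_mulVec_le M y
    _ = opNorm M := by rw [hx]; ring

lemma inner_toEuclideanLin_normalize (x : EuclideanSpace ℝ (Fin n)) :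
    ⟪toEuclideanLin M (‖x‖⁻¹ • x), ‖x‖⁻¹ • x⟫_ℝ = ⟪toEuclideanLin M x, x⟫_ℝ / ‖x‖ ^ 2 := by
  simp only [map_smul, inner_smul_left, inner_smul_right, RCLike.conj_to_real]
  field_simp

lemma lamMin_mul_norm_sq_le_dotProduct_mulVec (x : Fin n → ℝ) :
    lamMin M * ‖toLp 2 x‖ ^ 2 ≤ x ⬝ᵥ (M *ᵥ x) := by
  rcases eq_or_ne x 0 with rfl | hx
  · simp
  have hX : toLp 2 x ≠ 0 := by simpa using hx
  have hbdd : BddBelow (Set.range fun u : {u : EuclideanSpace ℝ (Fin n) // ‖u‖ = 1} =>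
      ⟪toEuclideanLin M u.1, u.1⟫_ℝ) :=
    ⟨-opNorm M, by
      rintro _ ⟨u, rfl⟩
      exact (abs_le.1 (abs_inner_toEuclideanLin_self_le M u.2)).1⟩
  have h : lamMin M ≤ ⟪toEuclideanLin M (‖toLp 2 x‖⁻¹ • toLp 2 x), ‖toLp 2 x‖⁻¹ • toLp 2 x⟫_ℝ :=
    ciInf_le hbdd ⟨_, norm_smul_inv_norm (𝕜 := ℝ) hX⟩
  rwa [inner_toEuclideanLin_normalize, inner_toEuclideanLin_toLp_self,
    le_div_iff₀ (by positivity)] at h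

lemma dotProduct_mulVec_le_lamMax_mul_norm_sq (x : Fin n → ℝ) :
    x ⬝ᵥ (M *ᵥ x) ≤ lamMax M * ‖toLp 2 x‖ ^ 2 := by
  rcases eq_or_ne x 0 with rfl | hx
  · simp
  have hX : toLp 2 x ≠ 0 := by simpa using hx
  have hbdd : BddAbove (Set.range fun u : {u : EuclideanSpace ℝ (Fin n) // ‖u‖ = 1} =>
      ⟪toEuclideanLin M u.1, u.1⟫_ℝ) :=
    ⟨opNorm M, by
      rintro _ ⟨u, rfl⟩
      exact (abs_le.1 (abs_inner_toEuclideanLin_self_le M u.2)).2⟩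
  have h : ⟪toEuclideanLin M (‖toLp 2 x‖⁻¹ • toLp 2 x), ‖toLp 2 x‖⁻¹ • toLp 2 x⟫_ℝ ≤ lamMax M :=
    le_ciSup hbdd ⟨_, norm_smul_inv_norm (𝕜 := ℝ) hX⟩
  rwa [inner_toEuclideanLin_normalize, inner_toEuclideanLin_toLp_self,
    div_le_iff₀ (by positivity)] at h

end Rayleigh

namespace Matrix.PosSemidef

variable {n : ℕ} {P : Matrix (Fin n) (Fin n) ℝ}

lemma transpose_eq_self (hP : P.PosSemidef) : Pᵀ = P :=
  (isHermitian_iff_isSymm.1 hP.isHermitian).eq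

lemma dotProduct_mulVec_comm (hP : P.PosSemidef) (x y : Fin n → ℝ) :
    x ⬝ᵥ (P *ᵥ y) = y ⬝ᵥ (P *ᵥ x) := by
  rw [dotProduct_mulVec, ← mulVec_transpose, hP.transpose_eq_self, dotProduct_comm]

lemma lamMax_nonneg (hP : P.PosSemidef) : 0 ≤ lamMax P :=
  Real.iSup_nonneg fun u => by
    simpa [EuclideanSpace.inner_eq_star_dotProduct, dotProduct_comm] using
      hP.dotProduct_mulVec_nonneg (ofLp u.1)

lemma dotProduct_mulVec_le_lamMax_mul_norm_mul_norm (hP : P.PosSemidef) (x y : Fin n → ℝ) :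
    y ⬝ᵥ (P *ᵥ x) ≤ lamMax P * ‖toLp 2 x‖ * ‖toLp 2 y‖ := by
  have hform (z : Fin n → ℝ) : 0 ≤ toBilin' P z z := by
    simpa [toBilin'_apply'] using hP.dotProduct_mulVec_nonneg z
  have cauchy_schwarz : (y ⬝ᵥ (P *ᵥ x)) ^ 2 ≤ (x ⬝ᵥ (P *ᵥ x)) * (y ⬝ᵥ (P *ᵥ y)) := by
    have := LinearMap.BilinForm.apply_mul_apply_le_of_forall_zero_le _ hform x y
    simp only [toBilin'_apply', hP.dotProduct_mulVec_comm x y] at this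
    linarith
  have hlam := hP.lamMax_nonneg
  refine le_trans (le_abs_self _) (abs_le_of_sq_le_sq ?_ (by positivity))
  calc (y ⬝ᵥ (P *ᵥ x)) ^ 2 ≤ (x ⬝ᵥ (P *ᵥ x)) * (y ⬝ᵥ (P *ᵥ y)) := cauchy_schwarz
    _ ≤ (lamMax P * ‖toLp 2 x‖ ^ 2) * (lamMax P * ‖toLp 2 y‖ ^ 2) :=
        mul_le_mul (dotProduct_mulVec_le_lamMax_mul_norm_sq P x)
          (dotProduct_mulVec_le_lamMax_mul_norm_sq P y)
          (by simpa using hP.dotProduct_mulVec_nonneg y) (by positivity)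
    _ = (lamMax P * ‖toLp 2 x‖ * ‖toLp 2 y‖) ^ 2 := by ring

end Matrix.PosSemidef

def marginLyapunov {ι : Type*} [Fintype ι] (A P : Matrix ι ι ℝ) (β : ℝ) : Matrix ι ι ℝ :=
  Aᵀ * P + P * A + (2 * β) • P

section Lyapunov

variable {n : ℕ} {P : Matrix (Fin n) (Fin n) ℝ}

lemma dotProduct_marginLyapunov_mulVec_le (hP : P.PosSemidef) (M : Matrix (Fin n) (Fin n) ℝ)
    {β : ℝ} (hβ : 0 ≤ β) (x : Fin n → ℝ) :
    x ⬝ᵥ (marginLyapunov M P β *ᵥ x) ≤ 2 * lamMax P * (opNorm M + β) * ‖toLp 2 x‖ ^ 2 := by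
  have expand : x ⬝ᵥ (marginLyapunov M P β *ᵥ x)
      = 2 * ((M *ᵥ x) ⬝ᵥ (P *ᵥ x)) + 2 * β * (x ⬝ᵥ (P *ᵥ x)) := by
    simp only [marginLyapunov, add_mulVec, smul_mulVec, ← mulVec_mulVec, dotProduct_add,
      dotProduct_smul, smul_eq_mul, dotProduct_mulVec x Mᵀ, vecMul_transpose,
      hP.dotProduct_mulVec_comm x (M *ᵥ x), dotProduct_comm (M *ᵥ x)]
    ring
  have cross : (M *ᵥ x) ⬝ᵥ (P *ᵥ x) ≤ lamMax P * opNorm M * ‖toLp 2 x‖ ^ 2 :=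
    calc (M *ᵥ x) ⬝ᵥ (P *ᵥ x) ≤ lamMax P * ‖toLp 2 x‖ * ‖toLp 2 (M *ᵥ x)‖ :=
          hP.dotProduct_mulVec_le_lamMax_mul_norm_mul_norm x (M *ᵥ x)
      _ ≤ lamMax P * ‖toLp 2 x‖ * (opNorm M * ‖toLp 2 x‖) := by
          have := hP.lamMax_nonneg
          gcongr
          exact norm_toLp_mulVec_le M x
      _ = lamMax P * opNorm M * ‖toLp 2 x‖ ^ 2 := by ring
  have diag := mul_le_mul_of_nonneg_left (dotProduct_mulVec_le_lamMax_mul_norm_sq P x) hβ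
  rw [expand]
  linarith

lemma posDef_sub_marginLyapunov {Q M : Matrix (Fin n) (Fin n) ℝ} (hP : P.PosDef) (hQ : Q.PosDef)
    {β : ℝ} (hβ : 0 ≤ β) (h : opNorm M < lamMin Q / (2 * lamMax P) - β) :
    (Q - marginLyapunov M P β).PosDef := by
  refine posDef_iff_dotProduct_mulVec.2 ⟨?_, fun x hx => ?_⟩
  · have hPt := hP.posSemidef.transpose_eq_self
    refine hQ.isHermitian.sub (isHermitian_iff_isSymm.2 ?_)
    simp [IsSymm, marginLyapunov, hPt, add_comm]
  rw [star_trivial]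
  have hPx := hP.dotProduct_mulVec_pos hx
  rw [star_trivial] at hPx
  have hX : 0 < ‖toLp 2 x‖ ^ 2 := by
    have : toLp 2 x ≠ 0 := by simpa using hx
    positivity
  have hlam : 0 < lamMax P := by
    nlinarith [dotProduct_mulVec_le_lamMax_mul_norm_sq P x]
  have margin : 2 * lamMax P * (opNorm M + β) < lamMin Q := by
    rw [lt_sub_iff_add_lt, lt_div_iff₀ (by positivity)] at h
    linarith
  rw [sub_mulVec, dotProduct_sub]
  linarith [mul_lt_mul_of_pos_right margin hX, lamMin_mul_norm_sq_le_dotProduct_mulVec Q x,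
    dotProduct_marginLyapunov_mulVec_le hP.posSemidef M hβ x]

end Lyapunov

lemma neg_marginLyapunov_riccati_closedLoop {ι κ : Type*} [Fintype ι] [Fintype κ]
    {A H P Q : Matrix ι ι ℝ} {B : Matrix ι κ ℝ} (L : Matrix κ ι ℝ) (β : ℝ) (hPt : Pᵀ = P)
    (hric : Aᵀ * P + P * A - P * B * Bᵀ * P + Q = 0) :
    -marginLyapunov (A + H + B * (-((1 / 2 : ℝ) • (Bᵀ * P)) + L)) P β
      = Q - marginLyapunov (B * L + H) P β := by
  have hQ : Q = P * B * Bᵀ * P - Aᵀ * P - P * A := by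
    linear_combination (norm := noncomm_ring) hric
  subst hQ
  simp only [marginLyapunov, transpose_add, transpose_mul, transpose_neg, transpose_smul,
    transpose_transpose, hPt, Matrix.add_mul, Matrix.mul_add, Matrix.neg_mul, Matrix.mul_neg,
    Matrix.smul_mul, Matrix.mul_smul, Matrix.mul_assoc]
  module

section Complexification

variable {ι : Type*} [Fintype ι]

lemma Matrix.exists_mulVec_eq_smul_of_isRoot_charpoly [DecidableEq ι] {K : Type*} [Field K]
    {A : Matrix ι ι K} {μ : K} (h : A.charpoly.IsRoot μ) : ∃ v ≠ 0, A *ᵥ v = μ • v := by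
  rw [← charpoly_toLin', ← Module.End.hasEigenvalue_iff_isRoot_charpoly] at h
  obtain ⟨v, hv⟩ := h.exists_hasEigenvector
  exact ⟨v, hv.2, Module.End.mem_eigenspace_iff.1 hv.1⟩

lemma Matrix.re_star_dotProduct_map_ofReal_mulVec_s13 (R : Matrix ι ι ℝ) (v : ι → ℂ) :
    (star v ⬝ᵥ (R.map Complex.ofReal *ᵥ v)).re =
      (fun i => (v i).re) ⬝ᵥ (R *ᵥ fun i => (v i).re) +
        (fun i => (v i).im) ⬝ᵥ (R *ᵥ fun i => (v i).im) := by
  simp only [dotProduct, mulVec, Matrix.map_apply, Pi.star_apply, Finset.mul_sum,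
    Complex.re_sum, ← Finset.sum_add_distrib, Complex.mul_re, Complex.mul_im, Complex.ofReal_re,
    Complex.ofReal_im, RCLike.star_def, Complex.conj_re, Complex.conj_im]
  refine Finset.sum_congr rfl fun i _ => Finset.sum_congr rfl fun j _ => ?_
  ring

lemma Matrix.PosDef.re_star_dotProduct_map_ofReal_mulVec_pos {R : Matrix ι ι ℝ} (hR : R.PosDef)
    {v : ι → ℂ} (hv : v ≠ 0) : 0 < (star v ⬝ᵥ (R.map Complex.ofReal *ᵥ v)).re := by
  rw [re_star_dotProduct_map_ofReal_mulVec_s13]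
  have hre := hR.posSemidef.dotProduct_mulVec_nonneg fun i => (v i).re
  have him := hR.posSemidef.dotProduct_mulVec_nonneg fun i => (v i).im
  rw [star_trivial] at hre him
  by_cases h : (fun i => (v i).re) = 0
  · have h' : (fun i => (v i).im) ≠ 0 := fun h' =>
      hv (funext fun i => Complex.ext (congrFun h i) (congrFun h' i))
    have := hR.dotProduct_mulVec_pos h'
    rw [star_trivial] at this
    linarith
  · have := hR.dotProduct_mulVec_pos h
    rw [star_trivial] at this
    linarith

lemma map_ofReal_marginLyapunov (A P : Matrix ι ι ℝ) (β : ℝ) :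
    (marginLyapunov A P β).map Complex.ofReal =
      (A.map Complex.ofReal)ᴴ * P.map Complex.ofReal + P.map Complex.ofReal * A.map Complex.ofReal
        + ((2 * β : ℝ) : ℂ) • P.map Complex.ofReal := by
  ext i j
  simp [marginLyapunov, Matrix.mul_apply]

lemma re_lt_of_posDef_neg_marginLyapunov [DecidableEq ι] {A P : Matrix ι ι ℝ} {β : ℝ}
    (hP : P.PosDef) (hN : (-marginLyapunov A P β).PosDef) {μ : ℂ}
    (hμ : (A.map Complex.ofReal).charpoly.IsRoot μ) : μ.re < -β := by
  obtain ⟨v, hv, hAv⟩ := exists_mulVec_eq_smul_of_isRoot_charpoly hμ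
  set p := star v ⬝ᵥ (P.map Complex.ofReal *ᵥ v)
  have hp : 0 < p.re := hP.re_star_dotProduct_map_ofReal_mulVec_pos hv
  have hform : star v ⬝ᵥ ((marginLyapunov A P β).map Complex.ofReal *ᵥ v)
      = (star μ + μ + ((2 * β : ℝ) : ℂ)) * p := by
    rw [map_ofReal_marginLyapunov, add_mulVec, add_mulVec, ← mulVec_mulVec, ← mulVec_mulVec,
      dotProduct_add, dotProduct_add, dotProduct_mulVec, ← star_mulVec, hAv, star_smul,
      smul_dotProduct, mulVec_smul, dotProduct_smul, smul_mulVec, dotProduct_smul]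
    simp only [smul_eq_mul, p]
    ring
  have hN' := hN.re_star_dotProduct_map_ofReal_mulVec_pos hv
  rw [Matrix.map_neg _ Complex.ofReal_neg, neg_mulVec, dotProduct_neg, hform] at hN'
  simp only [Complex.neg_re, Complex.mul_re, Complex.add_re, Complex.add_im, Complex.star_def,
    Complex.conj_re, Complex.conj_im, Complex.ofReal_re, Complex.ofReal_im] at hN'
  nlinarith

end Complexification

/-- Theorem 2 of the paper (common stability margin `β`): under the Riccati equation and
`‖B L + H‖ < λmin(Q)/(2 λmax(P)) − β`, the closed loop with `K = −(1/2) Bᵀ P` satisfies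
the Lyapunov inequality with margin `β`, and every eigenvalue of `A + H + B(K+L)` has
real part less than `−β`. -/
theorem riccati_margin_stability {n m : ℕ} (A H : Matrix (Fin n) (Fin n) ℝ)
    (B : Matrix (Fin n) (Fin m) ℝ) (L : Matrix (Fin m) (Fin n) ℝ)
    (P Q : Matrix (Fin n) (Fin n) ℝ) (β : ℝ) (hβ : 0 ≤ β)
    (hP : P.PosDef) (hQ : Q.PosDef)
    (hric : Aᵀ * P + P * A - P * B * Bᵀ * P + Q = 0)
    (hnorm : opNorm (B * L + H) < lamMin Q / (2 * lamMax P) - β)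
    (K : Matrix (Fin m) (Fin n) ℝ) (hK : K = -((1/2 : ℝ) • (Bᵀ * P))) :
    (-((A + H + B * (K + L))ᵀ * P + P * (A + H + B * (K + L)) + (2 * β) • P)).PosDef ∧
    ∀ μ : ℂ, (((A + H + B * (K + L)).map (Complex.ofReal)).charpoly).IsRoot μ →
      μ.re < -β := by
  subst hK
  have hN : (-marginLyapunov (A + H + B * (-((1 / 2 : ℝ) • (Bᵀ * P)) + L)) P β).PosDef := by
    rw [neg_marginLyapunov_riccati_closedLoop L β hP.posSemidef.transpose_eq_self hric]
    exact posDef_sub_marginLyapunov hP hQ hβ hnorm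
  exact ⟨hN, fun μ hμ => re_lt_of_posDef_neg_marginLyapunov hP hN hμ⟩
end
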